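/- For integers 2 ≤ i ≤ k with k ≥ 2i, the ratio of binomial coefficients satisfies C(k,i)·C(n-k, k-i)/C(n,k) ≤ (3k²/(i·n))^i, provided n ≥ 2k. -/
import Mathlib

open Finset

lemma pow_self_le_three_pow_mul_factorial (i : ℕ) :
    (i : ℝ) ^ i ≤ 3 ^ i * (Nat.factorial i : ℝ) := by
  have hfac : (0:ℝ) < (Nat.factorial i : ℝ) := by exact_mod_cast i.factorial_pos
  have h1 : (i:ℝ) ^ i / (Nat.factorial i : ℝ) ≤ Real.exp i := by
    calc (i:ℝ) ^ i / (Nat.factorial i : ℝ)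
        ≤ ∑ j ∈ range (i+1), (i:ℝ) ^ j / (Nat.factorial j : ℝ) := by
          refine Finset.single_le_sum (f := fun j => (i:ℝ) ^ j / (Nat.factorial j : ℝ))
            (fun j _ => by positivity) ?_
          simp
      _ ≤ Real.exp i := Real.sum_le_exp_of_nonneg (by positivity) _
  have h2 : Real.exp i ≤ (3:ℝ) ^ i := by
    have : Real.exp i = (Real.exp 1) ^ i := by
      rw [← Real.exp_nat_mul]; norm_num
    rw [this]
    exact pow_le_pow_left₀ (Real.exp_pos 1).le
      (le_trans Real.exp_one_lt_d9.le (by norm_num)) i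
  calc (i:ℝ) ^ i ≤ Real.exp i * (Nat.factorial i : ℝ) := by
        rw [← div_le_iff₀ hfac]; exact h1
    _ ≤ 3 ^ i * (Nat.factorial i : ℝ) := by
        exact mul_le_mul_of_nonneg_right h2 hfac.le

lemma pow_mul_choose_le (i : ℕ) : ∀ k n : ℕ, i ≤ k → k ≤ n →
    n ^ i * (n - i).choose (k - i) ≤ k ^ i * n.choose k := by
  induction i with
  | zero => intro k n _ _; simp
  | succ i ih =>
    intro k n hik hkn
    have hik' : i ≤ k := le_of_lt (Nat.lt_of_succ_le hik)
    have hkpos : i < k := Nat.lt_of_succ_le hik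
    have hnpos : i < n := lt_of_lt_of_le hkpos hkn
    -- identity: (n-i) * (n-i-1).choose (k-i-1) = (n-i).choose (k-i) * (k-i)
    have hid : (n - i) * (n - i - 1).choose (k - i - 1) = (n - i).choose (k - i) * (k - i) := by
      have h1 : n - i = (n - i - 1) + 1 := by omega
      have h2 : k - i = (k - i - 1) + 1 := by omega
      rw [h1, h2]
      exact Nat.add_one_mul_choose_eq _ _
    -- key : n * (n-i-1).choose (k-i-1) ≤ k * (n-i).choose (k-i)
    have hkey : n * (n - i - 1).choose (k - i - 1) ≤ k * (n - i).choose (k - i) := by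
      have hpos : 0 < n - i := by omega
      refine Nat.le_of_mul_le_mul_left ?_ hpos
      calc (n - i) * (n * (n - i - 1).choose (k - i - 1))
          = n * ((n - i) * (n - i - 1).choose (k - i - 1)) := by ring
        _ = n * ((n - i).choose (k - i) * (k - i)) := by rw [hid]
        _ = (n * (k - i)) * (n - i).choose (k - i) := by ring
        _ ≤ ((n - i) * k) * (n - i).choose (k - i) := by
            apply Nat.mul_le_mul_right
            have h3 : i * k ≤ i * n := Nat.mul_le_mul_left i hkn
            have h4 : i ≤ n := le_of_lt hnpos
            zify [hik', h4]
            push_cast at h3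
            nlinarith [h3]
        _ = (n - i) * (k * (n - i).choose (k - i)) := by ring
    have hsub1 : n - (i+1) = n - i - 1 := by omega
    have hsub2 : k - (i+1) = k - i - 1 := by omega
    calc n ^ (i+1) * (n - (i+1)).choose (k - (i+1))
        = n ^ i * (n * ((n - i - 1).choose (k - i - 1))) := by
          rw [hsub1, hsub2]; ring
      _ ≤ n ^ i * (k * (n - i).choose (k - i)) := Nat.mul_le_mul_left _ hkey
      _ = k * (n ^ i * (n - i).choose (k - i)) := by ring
      _ ≤ k * (k ^ i * n.choose k) := Nat.mul_le_mul_left _ (ih k n hik' hkn)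
      _ = k ^ (i+1) * n.choose k := by ring

theorem binom_ratio_bound (n k i : ℕ) (h2 : 2 ≤ i) (hik : i ≤ k) (h2i : 2 * i ≤ k)
    (hn : 2 * k ≤ n) :
    ((k.choose i : ℝ) * ((n - k).choose (k - i) : ℝ)) / (n.choose k : ℝ) ≤
      (3 * (k : ℝ) ^ 2 / ((i : ℝ) * (n : ℝ))) ^ i := by
  have hkn : k ≤ n := le_trans (by omega) hn
  have hipos : (0:ℝ) < i := by positivity
  have hkpos : (0:ℝ) < k := by
    have : 0 < k := by omega
    exact_mod_cast this
  have hnpos : (0:ℝ) < n := by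
    have : 0 < n := by omega
    exact_mod_cast this
  have hcnk : (0:ℝ) < (n.choose k : ℝ) := by
    exact_mod_cast Nat.choose_pos hkn
  have hfac : (0:ℝ) < (Nat.factorial i : ℝ) := by exact_mod_cast i.factorial_pos
  -- step 1 : (n-k).choose (k-i) ≤ (n-i).choose (k-i)
  have hstep1 : ((n - k).choose (k - i) : ℝ) ≤ ((n - i).choose (k - i) : ℝ) := by
    exact_mod_cast Nat.choose_le_choose (k - i) (by omega)
  -- step 2 : (n-i).choose (k-i) / n.choose k ≤ (k/n)^i
  have hstep2 : ((n - i).choose (k - i) : ℝ) / (n.choose k : ℝ) ≤ (k:ℝ)^i / (n:ℝ)^i := by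
    rw [div_le_div_iff₀ hcnk (by positivity)]
    have := pow_mul_choose_le i k n hik hkn
    have := (Nat.cast_le (α := ℝ)).2 this
    push_cast at this
    nlinarith [this]
  -- step 3 : choose k i ≤ k^i / i!
  have hstep3 : (k.choose i : ℝ) ≤ (k:ℝ)^i / (Nat.factorial i : ℝ) := by
    have := Nat.choose_le_pow_div (α := ℝ) i k
    push_cast at this ⊢
    exact this
  -- step 4 : i^i ≤ 3^i * i!
  have hstep4 := pow_self_le_three_pow_mul_factorial i
  have hchnn : (0:ℝ) ≤ ((n - i).choose (k - i) : ℝ) := by positivity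
  have hchk : (0:ℝ) ≤ (k.choose i : ℝ) := by positivity
  calc ((k.choose i : ℝ) * ((n - k).choose (k - i) : ℝ)) / (n.choose k : ℝ)
      ≤ ((k.choose i : ℝ) * ((n - i).choose (k - i) : ℝ)) / (n.choose k : ℝ) := by
        gcongr
    _ = (k.choose i : ℝ) * (((n - i).choose (k - i) : ℝ) / (n.choose k : ℝ)) := by ring
    _ ≤ ((k:ℝ)^i / (Nat.factorial i : ℝ)) * ((k:ℝ)^i / (n:ℝ)^i) := by
        apply mul_le_mul hstep3 hstep2 (by positivity) (by positivity)
    _ ≤ (3 * (k : ℝ) ^ 2 / ((i : ℝ) * (n : ℝ))) ^ i := by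
        rw [div_pow, mul_pow, mul_pow, div_mul_div_comm, sq, mul_pow]
        rw [div_le_div_iff₀ (by positivity) (by positivity)]
        have h := mul_le_mul_of_nonneg_right hstep4
          (show (0:ℝ) ≤ (k:ℝ)^i * (k:ℝ)^i * (n:ℝ)^i by positivity)
        nlinarith [h]
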